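/- arXiv:1512.03862 — 3 statements merged into one kernel-verified Lean document; each statement's English description precedes it below -/
import Mathlib

section
/- Every derivation tree of the McCarthy 91-function clauses corresponding to a successful computation with dimension-instrumented semantics satisfies: if mc91(N, X, K) is derivable then K ≤ 2 (assuming the standard semantics where mc91(N,X) holds iff X = N - 10 for N > 100 and X = 91 for N ≤ 100, with K the dimension of the derivation tree). -/
/-!
A derivation of `mc91 N X K` is forced: `X` is the value of the 91 function at `N`, and `K`
depends on `N` alone, being `0` above `100`, `1` on `[90, 100]` and `2` below `90`. For
`90 ≤ N ≤ 100` the first premise is a leaf and the second is a call on `N + 1 ∈ [91, 101]`;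
below `90` both premises have dimension `≥ 1`, and the second is the call on `91`, of dimension `1`.
-/

/-- Dimension-instrumented McCarthy 91-function. -/
inductive mc91 : ℤ → ℤ → ℕ → Prop
  | base {N X : ℤ} : N > 100 → X = N - 10 → mc91 N X 0
  | step {N Y2 X : ℤ} {K1 K2 K : ℕ} : N ≤ 100 → mc91 (N + 11) Y2 K1 →
      mc91 Y2 X K2 → K = (if K1 = K2 then K1 + 1 else max K1 K2) → mc91 N X K

def mc91Value (N : ℤ) : ℤ := if 100 < N then N - 10 else 91

def mc91Dim (N : ℤ) : ℕ := if 100 < N then 0 else if 90 ≤ N then 1 else 2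

theorem mc91Dim_le_two (N : ℤ) : mc91Dim N ≤ 2 := by
  unfold mc91Dim
  split_ifs <;> omega

namespace mc91

variable {N X : ℤ} {K : ℕ}

theorem eq_value (h : mc91 N X K) : X = mc91Value N := by
  induction h with
  | base hN hX => simp [mc91Value, hN, hX]
  | step hN _ _ _ ihY ihX =>
    rw [ihX, ihY]
    unfold mc91Value
    split_ifs <;> omega

theorem eq_dim (h : mc91 N X K) : K = mc91Dim N := by
  induction h with
  | base hN _ => simp [mc91Dim, hN]
  | step hN hY _ hK ihK1 ihK2 =>
    rw [hK, ihK1, ihK2, hY.eq_value]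
    unfold mc91Dim mc91Value
    split_ifs <;> omega

end mc91

theorem mc91_dim_le_two {N X : ℤ} {K : ℕ} (h : mc91 N X K) : K ≤ 2 :=
  h.eq_dim ▸ mc91Dim_le_two N
end

section
/- For the dimension-instrumented Fibonacci relation, for all A, B, K with fib(A, B, K) derivable, ¬(2K - 1 ≥ A). -/
/-- Dimension-instrumented Fibonacci relation. -/
inductive fib : ℤ → ℤ → ℕ → Prop
  | base {A : ℤ} : 0 ≤ A → A ≤ 1 → fib A A 0
  | step {A B1 B2 B : ℤ} {K1 K2 K : ℕ} : A > 1 → fib (A - 2) B2 K1 →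
      fib (A - 1) B1 K2 → B = B1 + B2 →
      K = (if K1 = K2 then K1 + 1 else max K1 K2) → fib A B K

theorem fib_dim_bound {A B : ℤ} {K : ℕ} (h : fib A B K) :
    2 * (K : ℤ) - 1 < A := by
  induction h with
  | base h0 h1 => simp; omega
  | step hA _ _ _ hK ih1 ih2 =>
    split at hK <;> subst hK <;> push_cast [Nat.max_def] <;> omega
end

section
/- For the dimension-instrumented counting-change relation, if cc(X, Y, Z, K) is derivable and Y ≥ 1 then K ≤ Y (the dimension is at most the number of kinds of coins). -/
/-- Dimension-combination operation. -/
def d2 (a b : ℕ) : ℕ := if a = b then a + 1 else max a b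

/-- Dimension-instrumented counting-change relation. -/
inductive cc : ℤ → ℤ → ℤ → ℕ → Prop
  | b1 {Y : ℤ} : Y > 0 → cc 0 Y 1 0
  | b2 {X Y : ℤ} : X < 0 → cc X Y 0 0
  | b3 {X Y : ℤ} : Y ≤ 0 → cc X Y 0 0
  | step {X Y A Z1 Z2 Z : ℤ} {K1 K2 K : ℕ} : X > 0 → A ≥ 1 → Y ≥ 1 →
      cc (X - A) Y Z1 K1 → cc X (Y - 1) Z2 K2 → Z = Z1 + Z2 →
      K = d2 (d2 0 K1) K2 → cc X Y Z K

/-! The bound `K ≤ max Y 0` holds for every derivation, so it can be proved by induction.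
In a step, `d2` exceeds the maximum of its arguments only on a tie, and then by one; the second
premise has one kind of coin fewer, so its dimension lies strictly below the bound and a tie
lifts the result at most to the bound itself. -/

theorem d2_comm (a b : ℕ) : d2 a b = d2 b a := by
  unfold d2
  split_ifs <;> omega

theorem d2_le_of_le_of_lt {a b n : ℕ} (ha : a ≤ n) (hb : b < n) : d2 a b ≤ n := by
  unfold d2
  split_ifs <;> omega

theorem cc.dim_le_toNat {X Y Z : ℤ} {K : ℕ} (h : cc X Y Z K) : K ≤ Y.toNat := by
  induction h with
  | b1 _ | b2 _ | b3 _ => exact Nat.zero_le _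
  | @step _ Y _ _ _ _ K₁ K₂ _ _ _ hY _ _ _ hK ih₁ ih₂ =>
    subst hK
    have hK₂ : K₂ < Y.toNat := by omega
    refine d2_le_of_le_of_lt ?_ hK₂
    rw [d2_comm]
    exact d2_le_of_le_of_lt ih₁ (by omega)

theorem cc_dim_le_coins {X Y Z : ℤ} {K : ℕ} (h : cc X Y Z K) (hY : Y ≥ 1) :
    (K : ℤ) ≤ Y := by
  have := h.dim_le_toNat
  omega
end
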